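/- For all a ∈ A one has I(a*) = conj(I(a)); consequently the sesquilinear form h(a,b) := I(a·b*) (linear in a, conjugate-linear in b) is Hermitian, i.e. h(b,a) = conj(h(a,b)). Moreover, the restriction of h to the p²-dimensional subspace M := span_ℂ{η₊^n η₋^m : 0 ≤ n,m ≤ p−1} is nondegenerate, and M admits an h-orthogonal basis consisting of (p²+1)/2 vectors of positive real h-norm and (p²−1)/2 vectors of negative real h-norm; that is, (M, h) is a pseudo-Euclidean space of signature ((p²+1)/2, (p²−1)/2). -/

import Mathlib

/-!
Every element of `A` is a combination of monomials `η₊^n η₋^m δ^k`, and `*` sends each monomial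
to a scalar multiple of itself. Since `I` vanishes on all monomials but the top one
`η₊^(p-1) η₋^(p-1)`, where `*` multiplies by `q^(2(p-1)²) = q²` and so turns `q⁻¹` into
`q = conj q⁻¹`, one gets `I(a*) = conj I(a)`, hence `h` is Hermitian.

On `M`, `h(η₊^n η₋^m, η₊^n' η₋^m')` vanishes unless `n + n' = m + m' = p - 1`, where it is a
power of `q` times `q⁻¹`. Numbering the monomials by `i = p n + m`, the Gram matrix is thus
antidiagonal (`i` pairs with `p² - 1 - i`) with unimodular entries, and the middle entry is `1`.
Each pair `x, y` with `h(x, y) = β` spans a hyperbolic plane with orthogonal basis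
`x + β y, y - conj β x` of norms `2, -2`; together with the middle monomial this gives the
signature `((p² + 1)/2, (p² - 1)/2)`.
-/

open scoped TensorProduct

noncomputable section

/-- `q = exp(2πi/p)`, a primitive `p`-th root of unity. -/
def q (p : ℕ) : ℂ := Complex.exp (2 * Real.pi * Complex.I / p)

/-- `q^{1/2} = exp(iπ/p)`. -/
def qh (p : ℕ) : ℂ := Complex.exp (Real.pi * Complex.I / p)

/-- The balanced q-number `[k] = (q^k - q^{-k})/(q - q^{-1})`. -/
def qnum (p k : ℕ) : ℂ := (q p ^ k - (q p)⁻¹ ^ k) / (q p - (q p)⁻¹)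

/-- The balanced q-factorial `[k]! = [1][2]⋯[k]`, with `[0]! = 1`. -/
def qfact (p k : ℕ) : ℂ := ∏ j ∈ Finset.range k, qnum p (j + 1)

/-- Generators `η₊, η₋, δ` of the coordinate algebra of `E(1,1|p)`. -/
inductive Gen : Type
  | ep : Gen
  | em : Gen
  | d : Gen

open FreeAlgebra in
/-- The defining relations of `A(E(1,1|p))`: the two-sided ideal generated by
`η₋η₊ − q²η₊η₋`, `η₊δ − q²δη₊`, `η₋δ − q²δη₋`, `δ^p − 1`, `η₊^p`, `η₋^p`. -/
inductive ERel (p : ℕ) : FreeAlgebra ℂ Gen → FreeAlgebra ℂ Gen → Prop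
  | commEta : ERel p (ι ℂ Gen.em * ι ℂ Gen.ep) ((q p ^ 2) • (ι ℂ Gen.ep * ι ℂ Gen.em))
  | commEpD : ERel p (ι ℂ Gen.ep * ι ℂ Gen.d) ((q p ^ 2) • (ι ℂ Gen.d * ι ℂ Gen.ep))
  | commEmD : ERel p (ι ℂ Gen.em * ι ℂ Gen.d) ((q p ^ 2) • (ι ℂ Gen.d * ι ℂ Gen.em))
  | deltaPow : ERel p (ι ℂ Gen.d ^ p) 1
  | epPow : ERel p (ι ℂ Gen.ep ^ p) 0
  | emPow : ERel p (ι ℂ Gen.em ^ p) 0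

/-- The coordinate algebra `A = A(E(1,1|p))` of the reduced quantum Poincaré group. -/
abbrev A (p : ℕ) : Type := RingQuot (ERel p)

/-- `η₊ ∈ A`. -/
def ηp (p : ℕ) : A p := RingQuot.mkAlgHom ℂ (ERel p) (FreeAlgebra.ι ℂ Gen.ep)

/-- `η₋ ∈ A`. -/
def ηm (p : ℕ) : A p := RingQuot.mkAlgHom ℂ (ERel p) (FreeAlgebra.ι ℂ Gen.em)

/-- `δ ∈ A`. -/
def dl (p : ℕ) : A p := RingQuot.mkAlgHom ℂ (ERel p) (FreeAlgebra.ι ℂ Gen.d)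

open ComplexConjugate Submodule

theorem pow_mul_pow_eq_smul_of_mul_eq_smul {R S : Type*} [CommSemiring R] [Semiring S]
    [Algebra R S] {x y : S} {c : R} (h : x * y = c • (y * x)) (m n : ℕ) :
    x ^ m * y ^ n = c ^ (m * n) • (y ^ n * x ^ m) := by
  have hx : ∀ m : ℕ, x ^ m * y = c ^ m • (y * x ^ m) := fun m => by
    induction m with
    | zero => simp
    | succ k ih =>
      rw [pow_succ, mul_assoc, h, mul_smul_comm, ← mul_assoc, ih, smul_mul_assoc, smul_smul,
        ← pow_succ', mul_assoc, ← pow_succ]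
  induction n with
  | zero => simp
  | succ k ih =>
    rw [pow_succ, ← mul_assoc, ih, smul_mul_assoc, mul_assoc, hx, mul_smul_comm, smul_smul,
      ← mul_assoc, ← pow_succ, ← pow_add, Nat.mul_succ]

theorem LinearMap.IsOrthoᵢ.eq_zero_of_mem_span {K V ι : Type*} [Field K] [AddCommGroup V]
    [Module K V] [Fintype ι] {σ : K →+* K} {B : V →ₗ[K] V →ₛₗ[σ] K} {e : ι → V}
    (ho : B.IsOrthoᵢ e) (hne : ∀ i, B (e i) (e i) ≠ 0) {a : V} (ha : a ∈ span K (Set.range e))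
    (h : ∀ i, B a (e i) = 0) : a = 0 := by
  obtain ⟨c, rfl⟩ := (mem_span_range_iff_exists_fun K).1 ha
  have hc : ∀ i, c i = 0 := fun i => by
    have hi := h i
    rw [map_sum, LinearMap.sum_apply, Finset.sum_eq_single i (fun j _ hji => by
      rw [map_smul, LinearMap.smul_apply, ho hji, smul_zero]) (by simp)] at hi
    simpa [hne i] using hi
  simp [hc]

section Antidiagonal

lemma Fin.lt_rev_self_iff {N : ℕ} (i : Fin N) : i < i.rev ↔ 2 * (i : ℕ) + 1 < N := by
  rw [Fin.lt_def, Fin.val_rev]; omega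

lemma Fin.rev_lt_self_iff {N : ℕ} (i : Fin N) : i.rev < i ↔ N < 2 * (i : ℕ) + 1 := by
  rw [Fin.lt_def, Fin.val_rev]; omega

lemma Fin.rev_eq_self_iff {N : ℕ} (i : Fin N) : i.rev = i ↔ 2 * (i : ℕ) + 1 = N := by
  rw [Fin.ext_iff, Fin.val_rev]; omega

variable {V : Type*} [AddCommGroup V] [Module ℂ V] (B : V →ₗ[ℂ] V →ₗ⋆[ℂ] ℂ) {N : ℕ}

def revSign (i : Fin N) : ℝ := if i < i.rev then 1 else if i.rev < i then -1 else 0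

lemma revSign_rev (i : Fin N) : revSign i.rev = -revSign i := by
  unfold revSign
  rw [Fin.rev_rev]
  split_ifs <;> grind

lemma revSign_mul_self {i : Fin N} (hi : i.rev ≠ i) : revSign i * revSign i = 1 := by
  unfold revSign
  split_ifs <;> grind

lemma revSign_eq_zero {i : Fin N} (hi : i.rev = i) : revSign i = 0 := by
  simp [revSign, hi]

/-- For `i < i.rev` and `β = B (v i) (v i.rev)` this is `v i + β • v i.rev`; at `i.rev` it is
`v i.rev - conj β • v i` when `B` is Hermitian; a fixed point of `rev` is kept. -/
def antidiagBasis (v : Fin N → V) (i : Fin N) : V :=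
  v i + ((revSign i : ℂ) * B (v i) (v i.rev)) • v i.rev

def antidiagNorm (i : Fin N) : ℝ := if i.rev = i then 1 else 2 * revSign i

variable {B}

lemma mul_conj_eq_one_of_norm_eq_one {z : ℂ} (hz : ‖z‖ = 1) : z * conj z = 1 := by
  rw [Complex.mul_conj', hz]; norm_num

theorem isOrthoᵢ_antidiagBasis {v : Fin N → V} (hB : ∀ x y, conj (B x y) = B y x)
    (hanti : ∀ i j, j ≠ i.rev → B (v i) (v j) = 0) (hunit : ∀ i, ‖B (v i) (v i.rev)‖ = 1) :
    B.IsOrthoᵢ (antidiagBasis B v) := by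
  intro i j hij
  simp only [Function.onFun, antidiagBasis, map_add, map_smul, map_smulₛₗ, LinearMap.add_apply,
    LinearMap.smul_apply, smul_eq_mul]
  by_cases hj : j = i.rev
  · subst hj
    have hi : i.rev ≠ i := Ne.symm hij
    rw [Fin.rev_rev, hanti i i hi.symm, hanti i.rev i.rev (by simpa using hi), ← hB (v i),
      revSign_rev]
    simp only [map_mul, map_neg, Complex.conj_ofReal, Complex.conj_conj, Complex.ofReal_neg]
    have hs : (revSign i : ℂ) * revSign i = 1 := by exact_mod_cast revSign_mul_self hi
    linear_combination
      (-(revSign i : ℂ) ^ 2 * B (v i) (v i.rev)) * mul_conj_eq_one_of_norm_eq_one (hunit i) -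
        B (v i) (v i.rev) * hs
  · have hj' : j.rev ≠ i.rev := fun h => hij (Fin.rev_injective h).symm
    rw [hanti i j hj, hanti i j.rev hj', hanti i.rev j (by rwa [Fin.rev_rev, ne_comm]),
      hanti i.rev j.rev (by rw [Fin.rev_rev]; exact fun h => hj (by rw [← h, Fin.rev_rev]))]
    ring

theorem antidiagBasis_self {v : Fin N → V} (hB : ∀ x y, conj (B x y) = B y x)
    (hanti : ∀ i j, j ≠ i.rev → B (v i) (v j) = 0) (hunit : ∀ i, ‖B (v i) (v i.rev)‖ = 1)
    (hfix : ∀ i, i.rev = i → B (v i) (v i) = 1) (i : Fin N) :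
    B (antidiagBasis B v i) (antidiagBasis B v i) = antidiagNorm i := by
  by_cases hi : i.rev = i
  · simp [antidiagBasis, antidiagNorm, hi, revSign_eq_zero hi, hfix i hi]
  · simp only [antidiagBasis, antidiagNorm, if_neg hi, map_add, map_smul, map_smulₛₗ,
      LinearMap.add_apply, LinearMap.smul_apply, smul_eq_mul]
    rw [hanti i i (Ne.symm hi), hanti i.rev i.rev (by simpa using hi), ← hB (v i)]
    simp only [map_mul, Complex.conj_ofReal, Complex.ofReal_mul, Complex.ofReal_ofNat]
    linear_combination (2 * (revSign i : ℂ)) * mul_conj_eq_one_of_norm_eq_one (hunit i)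

lemma antidiagNorm_ne_zero (i : Fin N) : antidiagNorm i ≠ 0 := by
  unfold antidiagNorm revSign
  simp only [Fin.lt_rev_self_iff, Fin.rev_lt_self_iff, Fin.rev_eq_self_iff]
  split_ifs <;> first | omega | norm_num

theorem span_antidiagBasis {v : Fin N → V} (hli : LinearIndependent ℂ (antidiagBasis B v)) :
    span ℂ (Set.range (antidiagBasis B v)) = span ℂ (Set.range v) := by
  have : FiniteDimensional ℂ (span ℂ (Set.range v)) :=
    FiniteDimensional.span_of_finite ℂ (Set.finite_range v)
  refine eq_of_le_of_finrank_le (span_le.2 ?_) ?_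
  · rintro _ ⟨i, rfl⟩
    exact add_mem (subset_span ⟨i, rfl⟩) (smul_mem _ _ (subset_span ⟨i.rev, rfl⟩))
  · rw [finrank_span_eq_card hli]
    exact finrank_range_le_card v

lemma antidiagNorm_pos_iff (i : Fin N) : 0 < antidiagNorm i ↔ (i : ℕ) < (N + 1) / 2 := by
  unfold antidiagNorm revSign
  simp only [Fin.lt_rev_self_iff, Fin.rev_lt_self_iff, Fin.rev_eq_self_iff]
  split_ifs <;> norm_num <;> omega

lemma antidiagNorm_neg_iff (i : Fin N) : antidiagNorm i < 0 ↔ ¬ (i : ℕ) < (N + 1) / 2 := by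
  unfold antidiagNorm revSign
  simp only [Fin.lt_rev_self_iff, Fin.rev_lt_self_iff, Fin.rev_eq_self_iff]
  split_ifs <;> norm_num <;> omega

open Finset in
theorem card_antidiagNorm_pos : #{i : Fin N | 0 < antidiagNorm i} = (N + 1) / 2 := by
  simp only [antidiagNorm_pos_iff, Fin.card_filter_val_lt]
  omega

open Finset in
theorem card_antidiagNorm_neg : #{i : Fin N | antidiagNorm i < 0} = N / 2 := by
  have h := card_filter_add_card_filter_not (s := univ) fun i : Fin N => (i : ℕ) < (N + 1) / 2
  simp only [antidiagNorm_neg_iff, Fin.card_filter_val_lt, card_univ, Fintype.card_fin] at h ⊢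
  omega

end Antidiagonal

lemma q_ne_zero (p : ℕ) : q p ≠ 0 := Complex.exp_ne_zero _

section RootOfUnity

variable {p : ℕ}

lemma isPrimitiveRoot_q (hp : p ≠ 0) : IsPrimitiveRoot (q p) p :=
  Complex.isPrimitiveRoot_exp p hp

lemma norm_q (hp : p ≠ 0) : ‖q p‖ = 1 := (isPrimitiveRoot_q hp).norm'_eq_one hp

lemma conj_q (hp : p ≠ 0) : conj (q p) = (q p)⁻¹ := (Complex.inv_eq_conj (norm_q hp)).symm

lemma q_pow_pred_mul_pred (hp : p ≠ 0) : q p ^ ((p - 1) * (p - 1)) = q p := by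
  have h : q p ^ (p - 1) = (q p)⁻¹ := eq_inv_of_mul_eq_one_left <| by
    rw [← pow_succ, Nat.sub_add_cancel (Nat.one_le_iff_ne_zero.2 hp),
      (isPrimitiveRoot_q hp).pow_eq_one]
  rw [pow_mul, h, inv_pow, h, inv_inv]

end RootOfUnity

section Relations

variable (p : ℕ)

lemma mkAlgHom_ι_mul_ι {x y : Gen} {c : ℂ}
    (h : ERel p (FreeAlgebra.ι ℂ x * FreeAlgebra.ι ℂ y)
      (c • (FreeAlgebra.ι ℂ y * FreeAlgebra.ι ℂ x))) :
    RingQuot.mkAlgHom ℂ (ERel p) (FreeAlgebra.ι ℂ x) *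
        RingQuot.mkAlgHom ℂ (ERel p) (FreeAlgebra.ι ℂ y) =
      c • (RingQuot.mkAlgHom ℂ (ERel p) (FreeAlgebra.ι ℂ y) *
        RingQuot.mkAlgHom ℂ (ERel p) (FreeAlgebra.ι ℂ x)) := by
  simpa only [map_mul, map_smul] using RingQuot.mkAlgHom_rel ℂ h

lemma ηm_mul_ηp : ηm p * ηp p = q p ^ 2 • (ηp p * ηm p) := mkAlgHom_ι_mul_ι p .commEta

lemma ηp_mul_dl : ηp p * dl p = q p ^ 2 • (dl p * ηp p) := mkAlgHom_ι_mul_ι p .commEpD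

lemma ηm_mul_dl : ηm p * dl p = q p ^ 2 • (dl p * ηm p) := mkAlgHom_ι_mul_ι p .commEmD

lemma dl_mul_ηp : dl p * ηp p = (q p ^ 2)⁻¹ • (ηp p * dl p) := by
  rw [ηp_mul_dl, inv_smul_smul₀ (pow_ne_zero 2 (q_ne_zero p))]

lemma dl_mul_ηm : dl p * ηm p = (q p ^ 2)⁻¹ • (ηm p * dl p) := by
  rw [ηm_mul_dl, inv_smul_smul₀ (pow_ne_zero 2 (q_ne_zero p))]

lemma dl_pow_self : dl p ^ p = 1 := by
  rw [dl, ← map_pow, RingQuot.mkAlgHom_rel ℂ ERel.deltaPow, map_one]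

lemma ηp_pow_self : ηp p ^ p = 0 := by
  rw [ηp, ← map_pow, RingQuot.mkAlgHom_rel ℂ ERel.epPow, map_zero]

lemma ηm_pow_self : ηm p ^ p = 0 := by
  rw [ηm, ← map_pow, RingQuot.mkAlgHom_rel ℂ ERel.emPow, map_zero]

lemma adjoin_generators_eq_top :
    Algebra.adjoin ℂ (Set.range fun g => RingQuot.mkAlgHom ℂ (ERel p) (FreeAlgebra.ι ℂ g)) = ⊤ := by
  rw [Set.range_comp', ← AlgHom.map_adjoin, FreeAlgebra.adjoin_range_ι, Algebra.map_top,
    AlgHom.range_eq_top]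
  exact RingQuot.mkAlgHom_surjective ℂ (ERel p)

end Relations

section Monomials

variable {p : ℕ}

def monomial (p n m k : ℕ) : A p := ηp p ^ n * ηm p ^ m * dl p ^ k

lemma monomial_mul_monomial (a b c a' b' c' : ℕ) : ∃ s : ℂ,
    monomial p a b c * monomial p a' b' c' = s • monomial p (a + a') (b + b') (c + c') := by
  have h1 := pow_mul_pow_eq_smul_of_mul_eq_smul (dl_mul_ηp p) c a'
  have h2 := pow_mul_pow_eq_smul_of_mul_eq_smul (ηm_mul_ηp p) b a'
  have h3 := pow_mul_pow_eq_smul_of_mul_eq_smul (dl_mul_ηm p) c b'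
  refine ⟨(q p ^ 2)⁻¹ ^ (c * a') * ((q p ^ 2)⁻¹ ^ (c * b') * (q p ^ 2) ^ (b * a')), ?_⟩
  calc monomial p a b c * monomial p a' b' c'
      = ηp p ^ a * (ηm p ^ b * (dl p ^ c * ηp p ^ a') * ηm p ^ b' * dl p ^ c') := by
        simp only [monomial, mul_assoc]
    _ = (q p ^ 2)⁻¹ ^ (c * a') •
          (ηp p ^ a * (ηm p ^ b * ηp p ^ a') * (dl p ^ c * ηm p ^ b') * dl p ^ c') := by
        rw [h1]; simp only [mul_assoc, mul_smul_comm, smul_mul_assoc]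
    _ = _ := by
        rw [h2, h3]
        simp only [monomial, pow_add, mul_assoc, mul_smul_comm, smul_mul_assoc, smul_smul]

theorem span_monomial_eq_top (p : ℕ) :
    span ℂ (Set.range fun x : ℕ × ℕ × ℕ => monomial p x.1 x.2.1 x.2.2) = ⊤ := by
  set M := span ℂ (Set.range fun x : ℕ × ℕ × ℕ => monomial p x.1 x.2.1 x.2.2)
  have hmul : ∀ x y, x ∈ M → y ∈ M → x * y ∈ M := fun x y hx hy => by
    have hxy : x * y ∈ M * M := mul_mem_mul hx hy
    rw [span_mul_span] at hxy
    refine span_le.2 ?_ hxy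
    rintro _ ⟨_, ⟨⟨a, b, c⟩, rfl⟩, _, ⟨⟨a', b', c'⟩, rfl⟩, rfl⟩
    obtain ⟨s, hs⟩ := monomial_mul_monomial (p := p) a b c a' b' c'
    simp only [SetLike.mem_coe, hs]
    exact smul_mem _ _ (subset_span ⟨(_, _, _), rfl⟩)
  have h1 : (1 : A p) ∈ M := subset_span ⟨(0, 0, 0), by simp [monomial]⟩
  have hgen := Algebra.adjoin_le (S := M.toSubalgebra h1 hmul) (s := Set.range fun g =>
    RingQuot.mkAlgHom ℂ (ERel p) (FreeAlgebra.ι ℂ g)) <| by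
    rintro _ ⟨g, rfl⟩
    cases g
    · exact subset_span ⟨(1, 0, 0), by simp [monomial, ηp]⟩
    · exact subset_span ⟨(0, 1, 0), by simp [monomial, ηm]⟩
    · exact subset_span ⟨(0, 0, 1), by simp [monomial, dl]⟩
  rw [adjoin_generators_eq_top, top_le_iff] at hgen
  exact eq_top_iff.2 fun x _ => (hgen ▸ Algebra.mem_top : x ∈ M.toSubalgebra h1 hmul)

lemma monomial_mod_right (n m k : ℕ) : monomial p n m k = monomial p n m (k % p) := by
  conv_lhs => rw [← Nat.div_add_mod k p]
  rw [monomial, pow_add, pow_mul, dl_pow_self, one_pow, one_mul, monomial]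

lemma monomial_eq_zero_of_le_left {n : ℕ} (hn : p ≤ n) (m k : ℕ) : monomial p n m k = 0 := by
  rw [monomial, ← Nat.sub_add_cancel hn, pow_add, ηp_pow_self, mul_zero, zero_mul, zero_mul]

lemma monomial_eq_zero_of_le_mid {m : ℕ} (hm : p ≤ m) (n k : ℕ) : monomial p n m k = 0 := by
  rw [monomial, ← Nat.sub_add_cancel hm, pow_add, ηm_pow_self, mul_zero, mul_zero, zero_mul]

end Monomials

def IsTopCoeff (p : ℕ) (I : A p →ₗ[ℂ] ℂ) : Prop :=
  ∀ n m k : ℕ, n < p → m < p → k < p →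
    I (ηp p ^ n * ηm p ^ m * dl p ^ k) = if n = p - 1 ∧ m = p - 1 ∧ k = 0 then (q p)⁻¹ else 0

theorem IsTopCoeff.apply_monomial {p : ℕ} (hp : p ≠ 0) {I : A p →ₗ[ℂ] ℂ} (hI : IsTopCoeff p I)
    (n m k : ℕ) :
    I (monomial p n m k) = if n = p - 1 ∧ m = p - 1 ∧ p ∣ k then (q p)⁻¹ else 0 := by
  rcases lt_or_ge n p with hn | hn
  · rcases lt_or_ge m p with hm | hm
    · rw [monomial_mod_right, monomial, hI n m _ hn hm (Nat.mod_lt _ (Nat.pos_of_ne_zero hp))]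
      simp only [Nat.dvd_iff_mod_eq_zero]
    · rw [monomial_eq_zero_of_le_mid hm, map_zero, if_neg (by omega)]
  · rw [monomial_eq_zero_of_le_left hn, map_zero, if_neg (by omega)]

section Star

variable {p : ℕ} (st : A p →ₗ⋆[ℂ] A p)

lemma map_one_of_antimul (hmul : ∀ x y, st (x * y) = st y * st x) (hinv : ∀ x, st (st x) = x) :
    st 1 = 1 := by
  simpa [hinv] using (hmul (st 1) 1).symm

lemma map_pow_of_antimul (hmul : ∀ x y, st (x * y) = st y * st x) (h1 : st 1 = 1) (x : A p)
    (n : ℕ) : st (x ^ n) = st x ^ n := by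
  induction n with
  | zero => simpa using h1
  | succ n ih => rw [pow_succ, hmul, ih, pow_succ']

lemma map_ηp_pow_mul_ηm_pow (hmul : ∀ x y, st (x * y) = st y * st x) (h1 : st 1 = 1)
    (hηp : st (ηp p) = ηp p) (hηm : st (ηm p) = ηm p) (n m : ℕ) :
    st (ηp p ^ n * ηm p ^ m) = (q p ^ 2) ^ (m * n) • (ηp p ^ n * ηm p ^ m) := by
  rw [hmul, map_pow_of_antimul st hmul h1, map_pow_of_antimul st hmul h1, hηp, hηm,
    pow_mul_pow_eq_smul_of_mul_eq_smul (ηm_mul_ηp p)]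

lemma exists_map_monomial (hmul : ∀ x y, st (x * y) = st y * st x) (h1 : st 1 = 1)
    (hηp : st (ηp p) = ηp p) (hηm : st (ηm p) = ηm p) (hdl : st (dl p) = dl p) (n m k : ℕ) :
    ∃ c : ℂ, st (monomial p n m k) = c • monomial p n m k := by
  obtain ⟨s, hs⟩ := monomial_mul_monomial (p := p) 0 0 k n m 0
  refine ⟨(q p ^ 2) ^ (m * n) * s, ?_⟩
  have hsplit : monomial p n m k = ηp p ^ n * ηm p ^ m * dl p ^ k := rfl
  rw [hsplit, hmul, map_ηp_pow_mul_ηm_pow st hmul h1 hηp hηm, map_pow_of_antimul st hmul h1, hdl,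
    mul_smul_comm, mul_smul]
  simpa [monomial] using congrArg ((q p ^ 2) ^ (m * n) • ·) hs

theorem IsTopCoeff.apply_map_monomial (hp : p ≠ 0) {I : A p →ₗ[ℂ] ℂ} (hI : IsTopCoeff p I)
    (hmul : ∀ x y, st (x * y) = st y * st x) (h1 : st 1 = 1)
    (hηp : st (ηp p) = ηp p) (hηm : st (ηm p) = ηm p) (hdl : st (dl p) = dl p) (n m k : ℕ) :
    I (st (monomial p n m k)) = conj (I (monomial p n m k)) := by
  by_cases h : n = p - 1 ∧ m = p - 1 ∧ p ∣ k
  · obtain ⟨rfl, rfl, j, rfl⟩ := h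
    have hmono : monomial p (p - 1) (p - 1) (p * j) = ηp p ^ (p - 1) * ηm p ^ (p - 1) := by
      rw [monomial, pow_mul, dl_pow_self, one_pow, mul_one]
    have htop := hI.apply_monomial hp (p - 1) (p - 1) 0
    rw [monomial, pow_zero, mul_one, if_pos ⟨rfl, rfl, dvd_zero p⟩] at htop
    rw [hmono, map_ηp_pow_mul_ηm_pow st hmul h1 hηp hηm, map_smul, htop, smul_eq_mul, map_inv₀,
      conj_q hp, inv_inv, pow_right_comm, q_pow_pred_mul_pred hp, sq,
      mul_inv_cancel_right₀ (q_ne_zero p)]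
  · obtain ⟨c, hc⟩ := exists_map_monomial st hmul h1 hηp hηm hdl n m k
    rw [hc, map_smul, hI.apply_monomial hp, if_neg h, smul_zero, map_zero]

theorem IsTopCoeff.apply_map_eq_conj (hp : p ≠ 0) {I : A p →ₗ[ℂ] ℂ} (hI : IsTopCoeff p I)
    (hmul : ∀ x y, st (x * y) = st y * st x) (h1 : st 1 = 1)
    (hηp : st (ηp p) = ηp p) (hηm : st (ηm p) = ηm p) (hdl : st (dl p) = dl p) (a : A p) :
    I (st a) = conj (I a) :=
  LinearMap.congr_fun (LinearMap.ext_on_range (span_monomial_eq_top p)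
    (f := I.comp st) (g := (starLinearEquiv ℂ (A := ℂ)).toLinearMap.comp I)
    fun x => hI.apply_map_monomial st hp hmul h1 hηp hηm hdl x.1 x.2.1 x.2.2) a

end Star

section Form

variable {R : Type*} [Ring R] [Algebra ℂ R]

/-- The form `h(a, b) = I(a b*)`. -/
def sesqForm (I : R →ₗ[ℂ] ℂ) (st : R →ₗ⋆[ℂ] R) : R →ₗ[ℂ] R →ₗ⋆[ℂ] ℂ :=
  ((LinearMap.mul ℂ R).compl₂ st).compr₂ₛₗ I

lemma sesqForm_apply (I : R →ₗ[ℂ] ℂ) (st : R →ₗ⋆[ℂ] R) (a b : R) :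
    sesqForm I st a b = I (a * st b) := rfl

lemma conj_sesqForm {I : R →ₗ[ℂ] ℂ} {st : R →ₗ⋆[ℂ] R} (hmul : ∀ x y, st (x * y) = st y * st x)
    (hinv : ∀ x, st (st x) = x) (hI : ∀ a, I (st a) = conj (I a)) (a b : R) :
    conj (sesqForm I st a b) = sesqForm I st b a := by
  rw [sesqForm_apply, sesqForm_apply, ← hI, hmul, hinv]

end Form

section Grid

lemma Fin.val_rev_div_mod {p : ℕ} (i : Fin (p ^ 2)) :
    (i.rev : ℕ) / p = p - 1 - i / p ∧ (i.rev : ℕ) % p = p - 1 - i % p := by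
  have hi : (i : ℕ) < p * p := sq p ▸ i.isLt
  have hp : 0 < p := Nat.pos_of_ne_zero (by rintro rfl; simp at hi)
  have hdiv : (i : ℕ) / p < p := Nat.div_lt_of_lt_mul hi
  have hmod : (i : ℕ) % p < p := Nat.mod_lt _ hp
  have hsplit : p * (p - 1 - i / p) + p * (i / p) + p = p * p := by
    rw [← Nat.mul_add, ← Nat.mul_succ]; congr 1; omega
  have hrev : (i.rev : ℕ) = p * (p - 1 - i / p) + (p - 1 - i % p) := by
    have := Nat.div_add_mod (i : ℕ) p
    have := sq p
    rw [Fin.val_rev]; omega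
  rw [hrev, Nat.mul_add_div hp, Nat.mul_add_mod, Nat.div_eq_of_lt (by omega : p - 1 - i % p < p),
    Nat.mod_eq_of_lt (by omega : p - 1 - i % p < p), add_zero]
  exact ⟨rfl, rfl⟩

lemma Fin.eq_rev_iff_div_mod {p : ℕ} (i j : Fin (p ^ 2)) :
    j = i.rev ↔ (i : ℕ) / p + j / p = p - 1 ∧ (i : ℕ) % p + j % p = p - 1 := by
  obtain ⟨hdiv, hmod⟩ := Fin.val_rev_div_mod i
  have hi : (i : ℕ) < p * p := sq p ▸ i.isLt
  have hp : 0 < p := Nat.pos_of_ne_zero (by rintro rfl; simp at hi)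
  have : (i : ℕ) / p < p := Nat.div_lt_of_lt_mul hi
  have : (i : ℕ) % p < p := Nat.mod_lt _ hp
  constructor
  · rintro rfl; omega
  · rintro ⟨h1, h2⟩
    rw [Fin.ext_iff, ← Nat.div_add_mod (j : ℕ) p, ← Nat.div_add_mod (i.rev : ℕ) p, hdiv, hmod]
    congr 2 <;> omega

variable {p : ℕ}

def etaMonomial (p : ℕ) (i : Fin (p ^ 2)) : A p := ηp p ^ ((i : ℕ) / p) * ηm p ^ ((i : ℕ) % p)

lemma range_etaMonomial (p : ℕ) :
    Set.range (etaMonomial p) = {x | ∃ n m : ℕ, n < p ∧ m < p ∧ x = ηp p ^ n * ηm p ^ m} := by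
  ext x
  constructor
  · rintro ⟨i, rfl⟩
    have hi : (i : ℕ) < p * p := sq p ▸ i.isLt
    have hp : 0 < p := Nat.pos_of_ne_zero (by rintro rfl; simp at hi)
    exact ⟨_, _, Nat.div_lt_of_lt_mul hi, Nat.mod_lt _ hp, rfl⟩
  · rintro ⟨n, m, hn, hm, rfl⟩
    have hp : 0 < p := by omega
    refine ⟨⟨p * n + m, by nlinarith⟩, ?_⟩
    simp only [etaMonomial, Nat.mul_add_div hp, Nat.mul_add_mod, Nat.div_eq_of_lt hm,
      Nat.mod_eq_of_lt hm, add_zero]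

lemma IsTopCoeff.apply_ηp_pow_mul_ηm_pow_mul (hp : p ≠ 0) {I : A p →ₗ[ℂ] ℂ} (hI : IsTopCoeff p I)
    (n m n' m' : ℕ) :
    I (ηp p ^ n * ηm p ^ m * (ηp p ^ n' * ηm p ^ m')) =
      (q p ^ 2) ^ (m * n') * if n + n' = p - 1 ∧ m + m' = p - 1 then (q p)⁻¹ else 0 := by
  have hmono := hI.apply_monomial hp (n + n') (m + m') 0
  simp only [monomial, pow_zero, mul_one, dvd_zero, and_true] at hmono
  have hprod : ηp p ^ n * ηm p ^ m * (ηp p ^ n' * ηm p ^ m') =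
      (q p ^ 2) ^ (m * n') • (ηp p ^ (n + n') * ηm p ^ (m + m')) := by
    calc ηp p ^ n * ηm p ^ m * (ηp p ^ n' * ηm p ^ m')
        = ηp p ^ n * ((ηm p ^ m * ηp p ^ n') * ηm p ^ m') := by simp only [mul_assoc]
      _ = (q p ^ 2) ^ (m * n') • (ηp p ^ n * ηp p ^ n' * (ηm p ^ m * ηm p ^ m')) := by
        rw [pow_mul_pow_eq_smul_of_mul_eq_smul (ηm_mul_ηp p)]
        simp only [smul_mul_assoc, mul_smul_comm, mul_assoc]
      _ = _ := by rw [← pow_add, ← pow_add]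
  rw [hprod, map_smul, smul_eq_mul, hmono]

variable {I : A p →ₗ[ℂ] ℂ} {st : A p →ₗ⋆[ℂ] A p}

lemma sesqForm_etaMonomial (hp : p ≠ 0) (hI : IsTopCoeff p I)
    (hst : ∀ n m : ℕ, st (ηp p ^ n * ηm p ^ m) = (q p ^ 2) ^ (m * n) • (ηp p ^ n * ηm p ^ m))
    (i j : Fin (p ^ 2)) :
    sesqForm I st (etaMonomial p i) (etaMonomial p j) =
      (q p ^ 2) ^ ((j : ℕ) % p * (j / p)) *
        ((q p ^ 2) ^ ((i : ℕ) % p * (j / p)) * if j = i.rev then (q p)⁻¹ else 0) := by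
  rw [sesqForm_apply, etaMonomial, etaMonomial, hst, mul_smul_comm, map_smul, smul_eq_mul,
    hI.apply_ηp_pow_mul_ηm_pow_mul hp]
  simp only [Fin.eq_rev_iff_div_mod]

lemma sesqForm_etaMonomial_of_ne_rev (hp : p ≠ 0) (hI : IsTopCoeff p I)
    (hst : ∀ n m : ℕ, st (ηp p ^ n * ηm p ^ m) = (q p ^ 2) ^ (m * n) • (ηp p ^ n * ηm p ^ m))
    {i j : Fin (p ^ 2)} (h : j ≠ i.rev) :
    sesqForm I st (etaMonomial p i) (etaMonomial p j) = 0 := by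
  simp [sesqForm_etaMonomial hp hI hst, h]

lemma norm_sesqForm_etaMonomial_rev (hp : p ≠ 0) (hI : IsTopCoeff p I)
    (hst : ∀ n m : ℕ, st (ηp p ^ n * ηm p ^ m) = (q p ^ 2) ^ (m * n) • (ηp p ^ n * ηm p ^ m))
    (i : Fin (p ^ 2)) : ‖sesqForm I st (etaMonomial p i) (etaMonomial p i.rev)‖ = 1 := by
  simp [sesqForm_etaMonomial hp hI hst, norm_q hp]

lemma sesqForm_etaMonomial_self_of_rev_eq (hp : p ≠ 0) (hI : IsTopCoeff p I)
    (hst : ∀ n m : ℕ, st (ηp p ^ n * ηm p ^ m) = (q p ^ 2) ^ (m * n) • (ηp p ^ n * ηm p ^ m))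
    {i : Fin (p ^ 2)} (h : i.rev = i) :
    sesqForm I st (etaMonomial p i) (etaMonomial p i) = 1 := by
  obtain ⟨hdiv, hmod⟩ := Fin.val_rev_div_mod i
  rw [h] at hdiv hmod
  have hmid : (i : ℕ) % p = i / p := by omega
  have htwo : 2 * ((i : ℕ) / p) = p - 1 := by omega
  rw [sesqForm_etaMonomial hp hI hst, if_pos h.symm, hmid, ← mul_assoc, ← pow_add, ← pow_mul,
    show 2 * ((i : ℕ) / p * (i / p) + i / p * (i / p)) = (p - 1) * (p - 1) by rw [← htwo]; ring,
    q_pow_pred_mul_pred hp, mul_inv_cancel₀ (q_ne_zero p)]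

end Grid

theorem statement4_general (p : ℕ) (hp : Odd p)
    (I : A p →ₗ[ℂ] ℂ)
    (hI : ∀ n m k : ℕ, n < p → m < p → k < p →
      I (ηp p ^ n * ηm p ^ m * dl p ^ k) =
        if n = p - 1 ∧ m = p - 1 ∧ k = 0 then (q p)⁻¹ else 0)
    (st : A p → A p)
    (hstAdd : ∀ x y : A p, st (x + y) = st x + st y)
    (hstSmul : ∀ (c : ℂ) (x : A p), st (c • x) = (starRingEnd ℂ) c • st x)
    (hstMul : ∀ x y : A p, st (x * y) = st y * st x)
    (hstInv : ∀ x : A p, st (st x) = x)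
    (hst1 : st (ηp p) = ηp p) (hst2 : st (ηm p) = ηm p) (hst3 : st (dl p) = dl p) :
    -- I(a*) = conj(I(a))
    (∀ a : A p, I (st a) = (starRingEnd ℂ) (I a)) ∧
    -- h(b,a) = conj(h(a,b)) for h(a,b) := I(a·b*)
    (∀ a b : A p, I (b * st a) = (starRingEnd ℂ) (I (a * st b))) ∧
    -- nondegeneracy of h on M
    (∀ a ∈ Submodule.span ℂ
        {x : A p | ∃ n m : ℕ, n < p ∧ m < p ∧ x = ηp p ^ n * ηm p ^ m},
      (∀ b ∈ Submodule.span ℂ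
          {x : A p | ∃ n m : ℕ, n < p ∧ m < p ∧ x = ηp p ^ n * ηm p ^ m},
        I (a * st b) = 0) → a = 0) ∧
    -- an h-orthogonal basis of M with (p²+1)/2 positive and (p²−1)/2 negative h-norms
    (∃ (e : Fin (p ^ 2) → A p) (sg : Fin (p ^ 2) → ℝ),
      LinearIndependent ℂ e ∧
      Submodule.span ℂ (Set.range e) =
        Submodule.span ℂ
          {x : A p | ∃ n m : ℕ, n < p ∧ m < p ∧ x = ηp p ^ n * ηm p ^ m} ∧
      (∀ i j : Fin (p ^ 2), i ≠ j → I (e i * st (e j)) = 0) ∧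
      (∀ i : Fin (p ^ 2), I (e i * st (e i)) = (sg i : ℂ)) ∧
      (Finset.univ.filter fun i : Fin (p ^ 2) => 0 < sg i).card = (p ^ 2 + 1) / 2 ∧
      (Finset.univ.filter fun i : Fin (p ^ 2) => sg i < 0).card = (p ^ 2 - 1) / 2) := by
  have hp0 : p ≠ 0 := hp.pos.ne'
  let stL : A p →ₗ⋆[ℂ] A p := ⟨⟨st, hstAdd⟩, hstSmul⟩
  have h1 : stL 1 = 1 := map_one_of_antimul stL hstMul hstInv
  have hconj := IsTopCoeff.apply_map_eq_conj stL hp0 hI hstMul h1 hst1 hst2 hst3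
  have herm := conj_sesqForm (I := I) (st := stL) hstMul hstInv hconj
  have hst := map_ηp_pow_mul_ηm_pow stL hstMul h1 hst1 hst2
  have hanti := fun i j (h : j ≠ Fin.rev i) => sesqForm_etaMonomial_of_ne_rev hp0 hI hst h
  have hunit := norm_sesqForm_etaMonomial_rev hp0 hI hst
  have hfix := fun i (h : Fin.rev i = i) => sesqForm_etaMonomial_self_of_rev_eq hp0 hI hst h
  have hortho := isOrthoᵢ_antidiagBasis herm hanti hunit
  have hnorm := antidiagBasis_self herm hanti hunit hfix
  have hne : ∀ i, sesqForm I stL (antidiagBasis _ (etaMonomial p) i)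
      (antidiagBasis _ (etaMonomial p) i) ≠ 0 := fun i => by
    rw [hnorm]; exact_mod_cast antidiagNorm_ne_zero i
  have hli := LinearMap.linearIndependent_of_isOrthoᵢ hortho hne
  have hspan := span_antidiagBasis hli
  rw [range_etaMonomial] at hspan
  refine ⟨hconj, fun a b => (herm a b).symm, fun a ha h0 => ?_, _, _, hli, hspan, hortho, hnorm,
    card_antidiagNorm_pos, ?_⟩
  · exact hortho.eq_zero_of_mem_span hne (hspan ▸ ha) fun i => h0 _ (hspan ▸ subset_span ⟨i, rfl⟩)
  · obtain ⟨k, hk⟩ := hp.pow (n := 2)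
    rw [card_antidiagNorm_neg, hk]
    omega

/-- `I` is compatible with the `*`-structure, the form `h(a,b) = I(a·b*)` is Hermitian,
and its restriction to `M = span{η₊^n η₋^m}` is a nondegenerate pseudo-Euclidean form
of signature `((p²+1)/2, (p²−1)/2)`. -/
theorem statement4 (p : ℕ) (hp : Odd p) (hp3 : 3 ≤ p)
    (I : A p →ₗ[ℂ] ℂ)
    (hI : ∀ n m k : ℕ, n < p → m < p → k < p →
      I (ηp p ^ n * ηm p ^ m * dl p ^ k) =
        if n = p - 1 ∧ m = p - 1 ∧ k = 0 then (q p)⁻¹ else 0)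
    (st : A p → A p)
    (hstAdd : ∀ x y : A p, st (x + y) = st x + st y)
    (hstSmul : ∀ (c : ℂ) (x : A p), st (c • x) = (starRingEnd ℂ) c • st x)
    (hstMul : ∀ x y : A p, st (x * y) = st y * st x)
    (hstInv : ∀ x : A p, st (st x) = x)
    (hst1 : st (ηp p) = ηp p) (hst2 : st (ηm p) = ηm p) (hst3 : st (dl p) = dl p) :
    -- I(a*) = conj(I(a))
    (∀ a : A p, I (st a) = (starRingEnd ℂ) (I a)) ∧
    -- h(b,a) = conj(h(a,b)) for h(a,b) := I(a·b*)
    (∀ a b : A p, I (b * st a) = (starRingEnd ℂ) (I (a * st b))) ∧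
    -- nondegeneracy of h on M
    (∀ a ∈ Submodule.span ℂ
        {x : A p | ∃ n m : ℕ, n < p ∧ m < p ∧ x = ηp p ^ n * ηm p ^ m},
      (∀ b ∈ Submodule.span ℂ
          {x : A p | ∃ n m : ℕ, n < p ∧ m < p ∧ x = ηp p ^ n * ηm p ^ m},
        I (a * st b) = 0) → a = 0) ∧
    -- an h-orthogonal basis of M with (p²+1)/2 positive and (p²−1)/2 negative h-norms
    (∃ (e : Fin (p ^ 2) → A p) (sg : Fin (p ^ 2) → ℝ),
      LinearIndependent ℂ e ∧
      Submodule.span ℂ (Set.range e) =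
        Submodule.span ℂ
          {x : A p | ∃ n m : ℕ, n < p ∧ m < p ∧ x = ηp p ^ n * ηm p ^ m} ∧
      (∀ i j : Fin (p ^ 2), i ≠ j → I (e i * st (e j)) = 0) ∧
      (∀ i : Fin (p ^ 2), I (e i * st (e i)) = (sg i : ℂ)) ∧
      (Finset.univ.filter fun i : Fin (p ^ 2) => 0 < sg i).card = (p ^ 2 + 1) / 2 ∧
      (Finset.univ.filter fun i : Fin (p ^ 2) => sg i < 0).card = (p ^ 2 - 1) / 2) :=
  statement4_general p hp I hI st hstAdd hstSmul hstMul hstInv hst1 hst2 hst3
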